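/- arXiv:2408.01367 — 2 statements merged into one kernel-verified Lean document; each statement's English description precedes it below -/
import Mathlib

section
/- Let Ω ⊂ ℝ^d be compact and let G(μ, x) = Σ_{n=1}^N (Γ_{θ̃_{1,n}} ⋄ F_{ξ̃_{1,n}})(μ, x) ⊙ ⋯ ⊙ (Γ_{θ̃_{T,n}} ⋄ F_{ξ̃_{T,n}})(μ, x) with F_{ξ̃_{t,n}} : ℝ^d → ℝ^{d'} affine and Γ_{θ̃_{t,n}} multi-head self-attention maps with d_in = d', d_head = k = 1, H = d'. Then for any ε > 0 there exist L ∈ ℕ and parameters (θ_ℓ, ξ_ℓ)_{ℓ=1}^L such that for all (μ, x) ∈ P(Ω) × Ω, |G(μ, x) − F_{ξ_L} ⋄ Γ_{θ_L} ⋄ ⋯ ⋄ F_{ξ_1} ⋄ Γ_{θ_1}(μ, x)| ≤ ε, with d_in(θ_ℓ) ≤ d + 3d', d_head(θ_ℓ) = k(θ_ℓ) = 1, and H(θ_ℓ) ≤ d'. -/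
open MeasureTheory Set Filter
open scoped ENNReal RealInnerProductSpace BigOperators Topology

noncomputable section

/-- Euclidean space `ℝ^n`. -/
abbrev E (n : ℕ) : Type := EuclideanSpace ℝ (Fin n)

/-- Build a vector of `ℝ^n` from its coordinates. -/
def toE {n : ℕ} (f : Fin n → ℝ) : E n := (EuclideanSpace.equiv (Fin n) ℝ).symm f

/-- Parameters `θ = (Wʰ, Qʰ, Kʰ, Vʰ)ₕ` of a multi-head attention layer with token
dimension `m`, head dimension `dh`, key/query dimension `k` and `H` heads.
(Matrices are represented as linear maps.) -/
structure AttentionParams (m dh k H : ℕ) where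
  W : Fin H → (E dh →L[ℝ] E m)
  Q : Fin H → (E m →L[ℝ] E k)
  K : Fin H → (E m →L[ℝ] E k)
  V : Fin H → (E m →L[ℝ] E dh)

/-- The (unmasked) multi-head self-attention in-context map `Γ_θ(μ, x)`. -/
def attention {m dh k H : ℕ} (θ : AttentionParams m dh k H)
    (μ : Measure (E m)) (x : E m) : E m :=
  x + ∑ h : Fin H, θ.W h (∫ y,
      (Real.exp (⟪θ.Q h x, θ.K h y⟫ / Real.sqrt k) /
        ∫ z, Real.exp (⟪θ.Q h x, θ.K h z⟫ / Real.sqrt k) ∂μ) • θ.V h y ∂μ)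

/-- In-context maps `(μ, x) ↦ G(μ, x)`. -/
abbrev ICMap (m m' : ℕ) : Type := Measure (E m) → E m → E m'

/-- In-context composition `(G₂ ⋄ G₁)(μ, x) = G₂(G₁(μ, ·)♯μ, G₁(μ, x))`. -/
def ictxComp {m m' m'' : ℕ} (G₂ : ICMap m' m'') (G₁ : ICMap m m') : ICMap m m'' :=
  fun μ x => G₂ (μ.map (G₁ μ)) (G₁ μ x)

/-- A context-free (tokenwise) layer, viewed as an in-context map. -/
def ctxFree {m m' : ℕ} (F : E m → E m') : ICMap m m' := fun _ x => F x

/-- `IsAttnChain dmax Hmax G` holds iff `G = F_{ξ_L} ⋄ Γ_{θ_L} ⋄ ⋯ ⋄ F_{ξ_1} ⋄ Γ_{θ_1}`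
for some `L ≥ 1`, where each `Γ_{θ_ℓ}` is a multi-head self-attention with token
dimension `≤ dmax`, head and key dimensions `1`, and at most `Hmax` heads, and each
`F_{ξ_ℓ}` is a context-free tokenwise layer. -/
inductive IsAttnChain (dmax Hmax : ℕ) : {m m' : ℕ} → ICMap m m' → Prop
  | base {m m' H : ℕ} (hm : m ≤ dmax) (hH : H ≤ Hmax)
      (θ : AttentionParams m 1 1 H) (F : E m → E m') :
      IsAttnChain dmax Hmax (ictxComp (ctxFree F) (attention θ))
  | step {m m' m'' H : ℕ} {T : ICMap m m'} (hT : IsAttnChain dmax Hmax T)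
      (hm : m' ≤ dmax) (hH : H ≤ Hmax)
      (θ : AttentionParams m' 1 1 H) (F : E m' → E m'') :
      IsAttnChain dmax Hmax (ictxComp (ctxFree F) (ictxComp (attention θ) T))

/-- The elementary in-context map `γ_λ`, `λ = (a, b, c, v)`. -/
def elemGamma {d : ℕ} (a : E d) (b c v : ℝ) (μ : Measure (E d)) (x : E d) : ℝ :=
  ⟪x, a⟫ + b + ∫ y,
      (Real.exp (c * (⟪x, a⟫ + b) * (⟪y, a⟫ + b)) * (v * (⟪a, y⟫ + b)) /
        ∫ z, Real.exp (c * (⟪x, a⟫ + b) * (⟪z, a⟫ + b)) ∂μ) ∂μ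

/-- Component-wise (Hadamard) product `v₁ ⊙ ⋯ ⊙ v_T` of vectors in `ℝ^n`. -/
def hprod {n T : ℕ} (f : Fin T → E n) : E n := toE fun i => ∏ t, f t i

/-- Nested application `Φ(v_T, Φ(v_{T-1}, ⋯ Φ(v_1, 𝟏) ⋯ ))`. -/
def nestPhi {n : ℕ} (Φ : E n × E n → E n) : (T : ℕ) → (Fin T → E n) → E n
  | 0, _ => toE fun _ => 1
  | T + 1, v => Φ (v (Fin.last T), nestPhi Φ T fun t => v t.castSucc)

/-- Composition of a list of in-context maps; the head of the list acts first. -/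
def compList {m : ℕ} : List (ICMap m m) → ICMap m m
  | [] => fun _ x => x
  | l :: ls => ictxComp (compList ls) l

/-! ### Masked (space-time) framework -/

/-- Time marginal `μ̄ = P♯μ`, `P(x, t) = t`. -/
def timeMarg {m : ℕ} (μ : Measure (E m × ℝ)) : Measure ℝ := μ.map Prod.snd

/-- Squared 2-Wasserstein distance `W₂(α, β)²`, as an infimum over couplings. -/
def W2sq {m : ℕ} (α β : Measure (E m)) : ℝ≥0∞ :=
  sInf {c | ∃ π : Measure (E m × E m), π.map Prod.fst = α ∧ π.map Prod.snd = β ∧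
      c = ∫⁻ p, edist p.1 p.2 ^ 2 ∂π}

/-- `μ ∈ Lip_C^σ(Ω̃)`: a probability measure on `Ω̃ = Ω × [0,1]` admitting a
disintegration `μ(dx, ds) = μ(dx|s) μ̄(ds)` whose conditional `s ↦ μ(·|s)` is
`C`-Lipschitz for `W₂`, and with `μ̄({0}) ≥ σ`. -/
def IsLipCtx {m : ℕ} (Ω : Set (E m)) (C σ : ℝ) (μ : Measure (E m × ℝ)) : Prop :=
  IsProbabilityMeasure μ ∧ μ ((Ω ×ˢ Icc (0:ℝ) 1)ᶜ) = 0 ∧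
    ENNReal.ofReal σ ≤ timeMarg μ {0} ∧
    ∃ κ : ℝ → Measure (E m), Measurable κ ∧ (∀ s, IsProbabilityMeasure (κ s)) ∧
      (∀ s, κ s Ωᶜ = 0) ∧
      μ = (timeMarg μ).bind (fun s => (κ s).map fun x => (x, s)) ∧
      ∀ s ∈ Icc (0:ℝ) 1, ∀ t ∈ Icc (0:ℝ) 1,
        W2sq (κ s) (κ t) ≤ ENNReal.ofReal (C * |s - t|) ^ 2

/-- The masked measure `μ_t = (1_{[0,t]} / μ̄([0,t])) · μ` (restriction of the time
variable to `[0, t]`, renormalized). -/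
def maskedM {m : ℕ} (μ : Measure (E m × ℝ)) (t : ℝ) : Measure (E m × ℝ) :=
  (μ (univ ×ˢ Icc 0 t))⁻¹ • μ.restrict (univ ×ˢ Icc 0 t)

/-- The masked measure, as a probability measure (junk value `μ` itself when
`μ̄([0,t]) = 0`; for `μ ∈ Lip_C^σ` and `t ∈ [0,1]` one has `μ̄([0,t]) ≥ σ > 0`). -/
def maskedP {m : ℕ} (μ : ProbabilityMeasure (E m × ℝ)) (t : ℝ) :
    ProbabilityMeasure (E m × ℝ) :=
  if h : μ.toMeasure (univ ×ˢ Icc 0 t) = 0 then μ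
  else ⟨maskedM μ.toMeasure t, ⟨by
    simp only [maskedM, Measure.smul_apply, Measure.restrict_apply_univ, smul_eq_mul]
    exact ENNReal.inv_mul_cancel h (measure_ne_top _ _)⟩⟩

/-- Space-time in-context maps `(μ, (x, t)) ↦ Λ(μ, x, t)`. -/
abbrev STMap (m m' : ℕ) : Type := Measure (E m × ℝ) → E m × ℝ → E m'

/-- Masked in-context composition
`(Γ₂ ⋄ Γ₁)(μ, x, t) = Γ₂((Γ₁(μ), Id)♯μ, Γ₁(μ, x, t), t)`. -/
def stComp {m m' m'' : ℕ} (Γ₂ : STMap m' m'') (Γ₁ : STMap m m') : STMap m m'' :=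
  fun μ p => Γ₂ (μ.map fun q => (Γ₁ μ q, q.2)) (Γ₁ μ p, p.2)

/-- A context-free layer acting tokenwise in space, as a space-time map. -/
def stCtxFree {m m' : ℕ} (F : E m → E m') : STMap m m' := fun _ p => F p.1

/-- The masked multi-head self-attention in-context map `Γ_θ(μ, x, t)`. -/
def maskedAttention {m dh k H : ℕ} (θ : AttentionParams m dh k H)
    (μ : Measure (E m × ℝ)) (p : E m × ℝ) : E m :=
  p.1 + ∑ h : Fin H, θ.W h (∫ y,
      ((Real.exp (⟪θ.Q h p.1, θ.K h y.1⟫ / Real.sqrt k) *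
          (Icc (0:ℝ) p.2).indicator 1 y.2) /
        ∫ z, Real.exp (⟪θ.Q h p.1, θ.K h z.1⟫ / Real.sqrt k) *
          (Icc (0:ℝ) p.2).indicator 1 z.2 ∂μ) • θ.V h y.1 ∂μ)

/-- The unmasked attention formula on space-time measures (no time masking). -/
def attentionST {m dh k H : ℕ} (θ : AttentionParams m dh k H)
    (μ : Measure (E m × ℝ)) (x : E m) : E m :=
  x + ∑ h : Fin H, θ.W h (∫ y,
      (Real.exp (⟪θ.Q h x, θ.K h y.1⟫ / Real.sqrt k) /
        ∫ z, Real.exp (⟪θ.Q h x, θ.K h z.1⟫ / Real.sqrt k) ∂μ) • θ.V h y.1 ∂μ)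

/-- Causality of a space-time in-context map: `Λ(μ, x, t) = Λ(μ_t, x, t)`. -/
def IsCausalM {m d' : ℕ} (Ω : Set (E m)) (C σ : ℝ) (Λ : STMap m d') : Prop :=
  ∀ μ, IsLipCtx Ω C σ μ → ∀ x ∈ Ω, ∀ t ∈ Icc (0:ℝ) 1,
    Λ μ (x, t) = Λ (maskedM μ t) (x, t)

/-- Identifiability: `μ_t = μ_{t'}` implies `Λ(μ_t, ·, t) = Λ(μ_{t'}, ·, t')`. -/
def IsIdentifiableM {m d' : ℕ} (Ω : Set (E m)) (C σ : ℝ) (Λ : STMap m d') : Prop :=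
  ∀ μ, IsLipCtx Ω C σ μ → ∀ t ∈ Icc (0:ℝ) 1, ∀ t' ∈ Icc (0:ℝ) 1,
    maskedM μ t = maskedM μ t' →
    ∀ x ∈ Ω, Λ (maskedM μ t) (x, t) = Λ (maskedM μ t') (x, t')

/-- Space-time in-context maps taking a probability measure (carrying the weak*
topology) as context. -/
abbrev PSTMap (m d' : ℕ) : Type := ProbabilityMeasure (E m × ℝ) → E m × ℝ → E d'

/-- Causality, probability-measure version. -/
def IsCausalP {m d' : ℕ} (Ω : Set (E m)) (C σ : ℝ) (Λ : PSTMap m d') : Prop :=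
  ∀ μ : ProbabilityMeasure (E m × ℝ), IsLipCtx Ω C σ μ.toMeasure →
    ∀ x ∈ Ω, ∀ t ∈ Icc (0:ℝ) 1, Λ μ (x, t) = Λ (maskedP μ t) (x, t)

/-- Identifiability, probability-measure version. -/
def IsIdentifiableP {m d' : ℕ} (Ω : Set (E m)) (C σ : ℝ) (Λ : PSTMap m d') : Prop :=
  ∀ μ : ProbabilityMeasure (E m × ℝ), IsLipCtx Ω C σ μ.toMeasure →
    ∀ t ∈ Icc (0:ℝ) 1, ∀ t' ∈ Icc (0:ℝ) 1,
      maskedP μ t = maskedP μ t' →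
      ∀ x ∈ Ω, Λ (maskedP μ t) (x, t) = Λ (maskedP μ t') (x, t')

/-- `e(μ̄) = max supp(μ̄)`: the endpoint of the support of the time marginal. -/
def timeEnd {m : ℕ} (μ : Measure (E m × ℝ)) : ℝ :=
  sSup {r : ℝ | ∀ ε > 0, timeMarg μ (Ioo (r - ε) (r + ε)) ≠ 0}

/-- The reduced space `X_C^σ = {(μ_t, x) : μ ∈ Lip_C^σ(Ω̃), x ∈ Ω, t ∈ [0,1]}`. -/
def XCset {d : ℕ} (Ω : Set (E d)) (C σ : ℝ) :
    Set (ProbabilityMeasure (E d × ℝ) × E d) :=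
  {p | ∃ μ : ProbabilityMeasure (E d × ℝ), IsLipCtx Ω C σ μ.toMeasure ∧
      ∃ t ∈ Icc (0:ℝ) 1, ∃ x ∈ Ω, p = (maskedP μ t, x)}

/-- Deep masked transformers `F_{ξ_L} ⋄ Γ_{θ_L} ⋄ ⋯ ⋄ F_{ξ_1} ⋄ Γ_{θ_1}` with masked
attentions of token dimension `≤ dmax`, head and key dimensions `1`, and `≤ Hmax`
heads. -/
inductive IsMaskedChain (dmax Hmax : ℕ) : {m m' : ℕ} → STMap m m' → Prop
  | base {m m' H : ℕ} (hm : m ≤ dmax) (hH : H ≤ Hmax)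
      (θ : AttentionParams m 1 1 H) (F : E m → E m') :
      IsMaskedChain dmax Hmax (stComp (stCtxFree F) (maskedAttention θ))
  | step {m m' m'' H : ℕ} {T : STMap m m'} (hT : IsMaskedChain dmax Hmax T)
      (hm : m' ≤ dmax) (hH : H ≤ Hmax)
      (θ : AttentionParams m' 1 1 H) (F : E m' → E m'') :
      IsMaskedChain dmax Hmax (stComp (stCtxFree F) (stComp (maskedAttention θ) T))

/-- Reduced in-context maps `(ν, x) ↦ Λ̄(ν, x)`. -/
abbrev RMap (m m' : ℕ) : Type := Measure (E m × ℝ) → E m → E m'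

/-- Composition of reduced maps; the push-forward keeps the time fixed. -/
def rComp {m m' m'' : ℕ} (R₂ : RMap m' m'') (R₁ : RMap m m') : RMap m m'' :=
  fun ν x => R₂ (ν.map fun q => (R₁ ν q.1, q.2)) (R₁ ν x)

/-- Context-free tokenwise layer as a reduced map. -/
def rCtxFree {m m' : ℕ} (F : E m → E m') : RMap m m' := fun _ x => F x

/-- Reduced map `Γ̄_θ(ν, x) = Γ_θ(ν, x, e(ν̄))` of the masked attention. -/
def reducedAttention {m dh k H : ℕ} (θ : AttentionParams m dh k H) : RMap m m :=
  fun ν x => maskedAttention θ ν (x, timeEnd ν)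

/-- Deep transformers built from reduced masked attentions and context-free layers. -/
inductive IsReducedChain (dmax Hmax : ℕ) : {m m' : ℕ} → RMap m m' → Prop
  | base {m m' H : ℕ} (hm : m ≤ dmax) (hH : H ≤ Hmax)
      (θ : AttentionParams m 1 1 H) (F : E m → E m') :
      IsReducedChain dmax Hmax (rComp (rCtxFree F) (reducedAttention θ))
  | step {m m' m'' H : ℕ} {T : RMap m m'} (hT : IsReducedChain dmax Hmax T)
      (hm : m' ≤ dmax) (hH : H ≤ Hmax)
      (θ : AttentionParams m' 1 1 H) (F : E m' → E m'') :
      IsReducedChain dmax Hmax (rComp (rCtxFree F) (rComp (reducedAttention θ) T))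

end

/-!
A token of width `d + 3d'` holds the input `x`, a running Hadamard product `p`, a running sum
`s` and a scratch block `y`. For each pair `(n, t)` a context-free layer writes `A x + b` into
`y`, an attention layer whose heads see only the `y`-block replaces it by
`(Γ_θ ⋄ F_{A,b})(μ, x)` (its queries, keys and values are those of `θ` precomposed with the
projection onto `y`), and a context-free layer multiplies the result into `p`; after each `n`,
`p` is added to `s` and reset to `1`. Reading off `s` at the end realizes `G` exactly: the
context-free layers may be arbitrary maps, so no approximation is needed.
-/

noncomputable section

namespace AttentionParams

variable {m n dh k H : ℕ}

def empty (m dh k : ℕ) : AttentionParams m dh k 0 := ⟨Fin.elim0, Fin.elim0, Fin.elim0, Fin.elim0⟩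

def liftSnd {W : Type*} [NormedAddCommGroup W] [NormedSpace ℝ W]
    (θ : AttentionParams n dh k H) (e : E m ≃L[ℝ] W × E n) : AttentionParams m dh k H where
  W h := (e.symm : W × E n →L[ℝ] E m) ∘L ContinuousLinearMap.inr ℝ W (E n) ∘L θ.W h
  Q h := θ.Q h ∘L ContinuousLinearMap.snd ℝ W (E n) ∘L (e : E m →L[ℝ] W × E n)
  K h := θ.K h ∘L ContinuousLinearMap.snd ℝ W (E n) ∘L (e : E m →L[ℝ] W × E n)
  V h := θ.V h ∘L ContinuousLinearMap.snd ℝ W (E n) ∘L (e : E m →L[ℝ] W × E n)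

end AttentionParams

section Attention

variable {m n dh k H : ℕ}

theorem attention_of_zero_heads (θ : AttentionParams m dh k 0) : attention θ = fun _ x => x := by
  funext μ x
  simp [attention]

theorem attention_liftSnd {W : Type*} [NormedAddCommGroup W] [NormedSpace ℝ W]
    (θ : AttentionParams n dh k H) (e : E m ≃L[ℝ] W × E n) (μ : Measure (E m)) (w : W) (y : E n) :
    attention (θ.liftSnd e) μ (e.symm (w, y)) =
      e.symm (w, attention θ (μ.map (Prod.snd ∘ e)) y) := by
  have hπ : AEMeasurable (Prod.snd ∘ e) μ :=
    (continuous_snd.comp e.continuous).measurable.aemeasurable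
  have hmap : ∀ {G : Type} [NormedAddCommGroup G] [NormedSpace ℝ G] (f : E n → G),
      Continuous f → ∫ z, f z ∂μ.map (Prod.snd ∘ e) = ∫ z, f (e z).2 ∂μ := fun f hf =>
    integral_map hπ hf.aestronglyMeasurable
  simp only [attention, AttentionParams.liftSnd, ContinuousLinearMap.comp_apply,
    ContinuousLinearEquiv.coe_coe, e.apply_symm_apply, ContinuousLinearMap.coe_snd',
    ContinuousLinearMap.inr_apply]
  rw [← map_sum, ← map_add]
  congr 1
  refine Prod.ext ?_ ?_
  · simp [Prod.fst_sum]
  · simp only [Prod.snd_add, Prod.snd_sum]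
    congr 1
    refine Finset.sum_congr rfl fun h _ => ?_
    rw [hmap _ (by fun_prop), hmap _ (by fun_prop)]

theorem measurable_attention (θ : AttentionParams m dh k H) (μ : Measure (E m)) [SFinite μ] :
    Measurable (attention θ μ) := by
  have hden : ∀ h, Measurable fun x =>
      ∫ z, Real.exp (⟪θ.Q h x, θ.K h z⟫ / Real.sqrt k) ∂μ := fun h =>
    (StronglyMeasurable.integral_prod_right' (f := fun p : E m × E m =>
      Real.exp (⟪θ.Q h p.1, θ.K h p.2⟫ / Real.sqrt k))
      (by fun_prop : Continuous _).stronglyMeasurable).measurable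
  have hnum : ∀ h, Measurable fun x => ∫ y,
      (Real.exp (⟪θ.Q h x, θ.K h y⟫ / Real.sqrt k) /
        ∫ z, Real.exp (⟪θ.Q h x, θ.K h z⟫ / Real.sqrt k) ∂μ) • θ.V h y ∂μ := by
    intro h
    have hden' : Measurable fun p : E m × E m =>
        ∫ z, Real.exp (⟪θ.Q h p.1, θ.K h z⟫ / Real.sqrt k) ∂μ := (hden h).comp measurable_fst
    exact (StronglyMeasurable.integral_prod_right' (f := fun p : E m × E m =>
      (Real.exp (⟪θ.Q h p.1, θ.K h p.2⟫ / Real.sqrt k) /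
        ∫ z, Real.exp (⟪θ.Q h p.1, θ.K h z⟫ / Real.sqrt k) ∂μ) • θ.V h p.2)
      (by fun_prop : Measurable _).stronglyMeasurable).measurable
  unfold attention
  fun_prop

end Attention

namespace IsAttnChain

variable {D Hmax m m' m'' : ℕ}

theorem of_ctxFree (hm : m ≤ D) (F : E m → E m') : IsAttnChain D Hmax (ctxFree F) := by
  have h := IsAttnChain.base (Hmax := Hmax) hm (Nat.zero_le Hmax) (AttentionParams.empty m 1 1) F
  rwa [attention_of_zero_heads] at h

theorem ctxFree_comp {G : ICMap m m'} (hG : IsAttnChain D Hmax G) (hm : m' ≤ D)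
    (F : E m' → E m'') : IsAttnChain D Hmax (ictxComp (ctxFree F) G) := by
  have h := hG.step hm (Nat.zero_le Hmax) (AttentionParams.empty m' 1 1) F
  rwa [attention_of_zero_heads] at h

theorem attention_comp {G : ICMap m m'} (hG : IsAttnChain D Hmax G) (hm : m' ≤ D)
    {H : ℕ} (hH : H ≤ Hmax) (θ : AttentionParams m' 1 1 H) :
    IsAttnChain D Hmax (ictxComp (attention θ) G) :=
  hG.step hm hH θ id

end IsAttnChain

/-- Agreement is only asked on s-finite contexts: pushing a context forward through a token map
needs the map to be measurable, and the token maps below are known to be so only there. -/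
def RealizableByAttnChain (D Hmax : ℕ) {d m : ℕ} (f : Measure (E d) → E d → E m) : Prop :=
  ∃ G : ICMap d m, IsAttnChain D Hmax G ∧ ∀ ν, SFinite ν → G ν = f ν

namespace RealizableByAttnChain

variable {D Hmax d m m' : ℕ} {f g : Measure (E d) → E d → E m}

theorem of_ctxFree (hd : d ≤ D) (F : E d → E m) :
    RealizableByAttnChain D Hmax fun _ => F :=
  ⟨ctxFree F, .of_ctxFree hd F, fun _ _ => rfl⟩

theorem congr (hf : RealizableByAttnChain D Hmax f) (hfg : ∀ ν, SFinite ν → ∀ x, f ν x = g ν x) :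
    RealizableByAttnChain D Hmax g :=
  let ⟨G, hG, hGf⟩ := hf
  ⟨G, hG, fun ν hν => (hGf ν hν).trans (funext (hfg ν hν))⟩

theorem ctxFree_comp (hf : RealizableByAttnChain D Hmax f) (hm : m ≤ D) (F : E m → E m') :
    RealizableByAttnChain D Hmax fun ν x => F (f ν x) :=
  let ⟨G, hG, hGf⟩ := hf
  ⟨_, hG.ctxFree_comp hm F, fun ν hν => by
    change (fun x => F (G ν x)) = _
    rw [hGf ν hν]⟩

theorem attention_comp (hf : RealizableByAttnChain D Hmax f) (hm : m ≤ D) {H : ℕ}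
    (hH : H ≤ Hmax) (θ : AttentionParams m 1 1 H) :
    RealizableByAttnChain D Hmax fun ν x => attention θ (ν.map (f ν)) (f ν x) :=
  let ⟨G, hG, hGf⟩ := hf
  ⟨_, hG.attention_comp hm hH θ, fun ν hν => by
    change (fun x => attention θ (ν.map (G ν)) (G ν x)) = _
    rw [hGf ν hν]⟩

theorem attention_snd_comp {W : Type*} [NormedAddCommGroup W] [NormedSpace ℝ W]
    [MeasurableSpace W] [BorelSpace W] (e : E m ≃L[ℝ] W × E n)
    {w : Measure (E d) → E d → W} {a : E d → E n}
    (hf : RealizableByAttnChain D Hmax fun ν x => e.symm (w ν x, a x))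
    (hw : ∀ ν, SFinite ν → Measurable (w ν)) (ha : Measurable a) (hm : m ≤ D) {H : ℕ}
    (hH : H ≤ Hmax) (θ : AttentionParams n 1 1 H) :
    RealizableByAttnChain D Hmax fun ν x => e.symm (w ν x, attention θ (ν.map a) (a x)) := by
  refine (hf.attention_comp hm hH (θ.liftSnd e)).congr fun ν hν x => ?_
  have hΦ : Measurable fun x => e.symm (w ν x, a x) :=
    e.symm.continuous.measurable.comp ((hw ν hν).prodMk ha)
  have hπΦ : (Prod.snd ∘ e) ∘ (fun x => e.symm (w ν x, a x)) = a := by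
    funext x
    simp
  rw [attention_liftSnd, Measure.map_map (continuous_snd.comp e.continuous).measurable hΦ, hπΦ]

end RealizableByAttnChain

section Token

/-- Any linear identification of the token space with its four blocks will do. -/
def tokenEquiv (d d' : ℕ) : E (d + 3 * d') ≃L[ℝ] (E d × (Fin d' → ℝ) × (Fin d' → ℝ)) × E d' :=
  ContinuousLinearEquiv.ofFinrankEq (by simp; ring)

variable {d d' Hmax : ℕ}

def token (x : E d) (p s : Fin d' → ℝ) : E (d + 3 * d') := (tokenEquiv d d').symm ((x, p, s), 0)

theorem measurable_attention_comp (θ : AttentionParams d' 1 1 Hmax) {a : E d → E d'}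
    (ha : Measurable a) (ν : Measure (E d)) [SFinite ν] :
    Measurable fun x => attention θ (ν.map a) (a x) :=
  (measurable_attention θ _).comp ha

theorem RealizableByAttnChain.token_mul_attention {p s : Measure (E d) → E d → Fin d' → ℝ}
    (hf : RealizableByAttnChain (d + 3 * d') Hmax fun ν x => token x (p ν x) (s ν x))
    (hp : ∀ ν, SFinite ν → Measurable (p ν)) (hs : ∀ ν, SFinite ν → Measurable (s ν))
    (θ : AttentionParams d' 1 1 Hmax) {a : E d → E d'} (ha : Measurable a) :
    RealizableByAttnChain (d + 3 * d') Hmax fun ν x =>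
      token x (p ν x * WithLp.ofLp (attention θ (ν.map a) (a x))) (s ν x) := by
  let e := tokenEquiv d d'
  have hload := hf.ctxFree_comp le_rfl fun u => e.symm ((e u).1, a (e u).1.1)
  have hattn := (hload.congr (g := fun ν x => e.symm ((x, p ν x, s ν x), a x))
    (fun ν _ x => by simp [token, e])).attention_snd_comp e
    (fun ν hν => measurable_id.prodMk ((hp ν hν).prodMk (hs ν hν))) ha le_rfl le_rfl θ
  refine (hattn.ctxFree_comp le_rfl fun u =>
    token (e u).1.1 ((e u).1.2.1 * WithLp.ofLp (e u).2) (e u).1.2.2).congr fun ν _ x => ?_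
  simp

theorem RealizableByAttnChain.token_mul_prod {ι : Type*} {p s : Measure (E d) → E d → Fin d' → ℝ}
    (hf : RealizableByAttnChain (d + 3 * d') Hmax fun ν x => token x (p ν x) (s ν x))
    (hp : ∀ ν, SFinite ν → Measurable (p ν)) (hs : ∀ ν, SFinite ν → Measurable (s ν))
    (S : Finset ι) (θ : ι → AttentionParams d' 1 1 Hmax) {a : ι → E d → E d'}
    (ha : ∀ i, Measurable (a i)) :
    RealizableByAttnChain (d + 3 * d') Hmax fun ν x =>
      token x (p ν x * ∏ i ∈ S, WithLp.ofLp (attention (θ i) (ν.map (a i)) (a i x))) (s ν x) := by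
  classical
  induction S using Finset.induction_on with
  | empty => simpa using hf
  | insert i S hi ih =>
    have hprod : ∀ ν, SFinite ν → Measurable fun x =>
        p ν x * ∏ j ∈ S, WithLp.ofLp (attention (θ j) (ν.map (a j)) (a j x)) := fun ν hν =>
      (hp ν hν).mul <| Finset.measurable_prod S fun j _ =>
        (PiLp.continuous_ofLp 2 _).measurable.comp (measurable_attention_comp (θ j) (ha j) ν)
    refine (ih.token_mul_attention hprod hs (θ i) (ha i)).congr fun ν _ x => ?_
    rw [Finset.prod_insert hi]
    congr 1
    ring

theorem realizableByAttnChain_token_sum_prod {ι κ : Type*} [Fintype ι] (S : Finset κ)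
    (θ : κ → ι → AttentionParams d' 1 1 Hmax) {a : κ → ι → E d → E d'}
    (ha : ∀ n t, Measurable (a n t)) :
    RealizableByAttnChain (d + 3 * d') Hmax fun ν x => token x 1
      (∑ n ∈ S, ∏ t, WithLp.ofLp (attention (θ n t) (ν.map (a n t)) (a n t x))) := by
  classical
  induction S using Finset.induction_on with
  | empty => simpa using RealizableByAttnChain.of_ctxFree (by omega) fun x => token x 1 0
  | insert n S hn ih =>
    have hsum : ∀ ν, SFinite ν → Measurable fun x =>
        ∑ n ∈ S, ∏ t, WithLp.ofLp (attention (θ n t) (ν.map (a n t)) (a n t x)) := fun ν hν =>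
      Finset.measurable_sum S fun n _ => Finset.measurable_prod _ fun t _ =>
        (PiLp.continuous_ofLp 2 _).measurable.comp (measurable_attention_comp (θ n t) (ha n t) ν)
    have hmul := ih.token_mul_prod (fun _ _ => measurable_const) hsum Finset.univ (θ n) (ha n)
    let e := tokenEquiv d d'
    refine (hmul.ctxFree_comp le_rfl fun u =>
      token (e u).1.1 1 ((e u).1.2.2 + (e u).1.2.1)).congr fun ν _ x => ?_
    simp [token, e, Finset.sum_insert hn, add_comm]

theorem realizableByAttnChain_sum_hprod {T N : ℕ} (θ : Fin N → Fin T → AttentionParams d' 1 1 Hmax)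
    {a : Fin N → Fin T → E d → E d'} (ha : ∀ n t, Measurable (a n t)) :
    RealizableByAttnChain (d + 3 * d') Hmax fun ν x =>
      ∑ n, hprod fun t => attention (θ n t) (ν.map (a n t)) (a n t x) := by
  let e := tokenEquiv d d'
  refine ((realizableByAttnChain_token_sum_prod Finset.univ θ ha).ctxFree_comp le_rfl
    fun u => toE (e u).1.2.2).congr fun ν _ x => ?_
  simp [token, e, hprod, toE, map_sum, Finset.prod_fn]

end Token

end

theorem deep_transformer_approx_general {d d' : ℕ} (Ω : Set (E d))
    (T N : ℕ) (θ : Fin T → Fin N → AttentionParams d' 1 1 d')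
    (A : Fin T → Fin N → (E d →L[ℝ] E d')) (b : Fin T → Fin N → E d')
    {ε : ℝ} (hε : 0 < ε) :
    ∃ G : ICMap d d', IsAttnChain (d + 3 * d') d' G ∧
      ∀ (μ : ProbabilityMeasure Ω) (x : Ω),
        ‖(∑ n : Fin N, hprod fun t : Fin T =>
              attention (θ t n)
                ((μ.toMeasure.map Subtype.val).map fun y => A t n y + b t n)
                (A t n (x : E d) + b t n))
          - G (μ.toMeasure.map Subtype.val) (x : E d)‖ ≤ ε := by
  obtain ⟨G, hG, hGf⟩ := realizableByAttnChain_sum_hprod (fun n t => θ t n)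
    (a := fun n t y => A t n y + b t n) fun n t => by fun_prop
  refine ⟨G, hG, fun μ x => ?_⟩
  rw [hGf _ inferInstance, sub_self, norm_zero]
  exact hε.le

/-- **Approximation of `G` by a deep transformer (Lemma 4).** Any map of the form
`G(μ, x) = Σₙ (Γ_{θ̃₁ₙ} ⋄ F_{ξ̃₁ₙ})(μ, x) ⊙ ⋯ ⊙ (Γ_{θ̃_Tₙ} ⋄ F_{ξ̃_Tₙ})(μ, x)` (affine
`F_{ξ̃ₜₙ} : ℝ^d → ℝ^{d'}`, attentions with `d_in = d'`, `d_head = k = 1`, `H = d'`) can be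
uniformly `ε`-approximated on `P(Ω) × Ω` by a deep transformer whose attention layers
have token dimension `≤ d + 3d'`, head and key dimensions `1` and at most `d'` heads. -/
theorem deep_transformer_approx {d d' : ℕ} (Ω : Set (E d)) (hΩ : IsCompact Ω)
    (T N : ℕ) (θ : Fin T → Fin N → AttentionParams d' 1 1 d')
    (A : Fin T → Fin N → (E d →L[ℝ] E d')) (b : Fin T → Fin N → E d')
    {ε : ℝ} (hε : 0 < ε) :
    ∃ G : ICMap d d', IsAttnChain (d + 3 * d') d' G ∧
      ∀ (μ : ProbabilityMeasure Ω) (x : Ω),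
        ‖(∑ n : Fin N, hprod fun t : Fin T =>
              attention (θ t n)
                ((μ.toMeasure.map Subtype.val).map fun y => A t n y + b t n)
                (A t n (x : E d) + b t n))
          - G (μ.toMeasure.map Subtype.val) (x : E d)‖ ≤ ε :=
  deep_transformer_approx_general Ω T N θ A b hε
end

section
/- Let Ω ⊂ ℝ^d be compact, Ω̃ = Ω × [0,1], C > 0, σ ∈ (0,1), and let Λ : Lip_C^σ(Ω̃) × Ω̃ → ℝ^{d'} be a causal and identifiable space-time in-context map. Then for every (μ, x, t) ∈ Lip_C^σ(Ω̃) × Ω̃, Λ(μ, x, t) = Λ̄(μ_t, x), where Λ̄ is the reduced map Λ̄(ν, x) = Λ(ν, x, e(ν̄)) and e(ν̄) = max{r ∈ supp(ν̄)} is the endpoint of the support of the time marginal ν̄ of ν. -/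
open MeasureTheory Set Filter
open scoped ENNReal RealInnerProductSpace BigOperators Topology

/-!
Let `e` be the right end of the support of the time marginal of `μ_t`. Because `μ̄` charges
`0`, `e ∈ [0, t]`, and `μ̄` gives no mass to `(e, t]`, so `μ_e = μ_t`. Causality replaces `μ`
by `μ_t`, and identifiability applied to `μ_e = μ_t` moves the time from `t` to `e`.
-/

namespace MeasureTheory.Measure

theorem support_eq_setOf_measure_Ioo_ne_zero (ρ : Measure ℝ) :
    ρ.support = {r | ∀ ε > 0, ρ (Ioo (r - ε) (r + ε)) ≠ 0} := by
  ext r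
  simp only [(Metric.nhds_basis_ball (x := r)).mem_measureSupport, Real.ball_eq_Ioo,
    pos_iff_ne_zero, mem_ofPred_eq]

theorem support_smul {X : Type*} [TopologicalSpace X] [MeasurableSpace X] (ρ : Measure X)
    {c : ℝ≥0∞} (hc : c ≠ 0) : (c • ρ).support = ρ.support := by
  ext x
  simp only [mem_support_iff_forall, smul_apply, smul_eq_mul, ENNReal.mul_pos_iff,
    pos_iff_ne_zero.2 hc, true_and]

theorem mem_support_of_measure_singleton_ne_zero {X : Type*} [TopologicalSpace X]
    [MeasurableSpace X] {ρ : Measure X} {x : X} (h : ρ {x} ≠ 0) : x ∈ ρ.support :=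
  (mem_support_iff_forall x).2 fun _ hU => pos_iff_ne_zero.2 fun hU0 =>
    h (measure_mono_null (singleton_subset_iff.2 (mem_of_mem_nhds hU)) hU0)

theorem support_subset_Iic_of_measure_Ioi_eq_zero {ρ : Measure ℝ} {t : ℝ}
    (h : ρ (Ioi t) = 0) : ρ.support ⊆ Iic t := fun r hr => by
  by_contra hrt
  exact subset_compl_support_of_isOpen isOpen_Ioi h (mem_Ioi.2 (not_le.1 hrt)) hr

theorem measure_Ioi_sSup_support {ρ : Measure ℝ} (h : BddAbove ρ.support) :
    ρ (Ioi (sSup ρ.support)) = 0 :=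
  measure_mono_null (t := ρ.supportᶜ) (fun _ hr hmem => not_le.2 hr (le_csSup h hmem))
    measure_compl_support

theorem support_restrict_Icc_subset_Iic (ρ : Measure ℝ) (a t : ℝ) :
    (ρ.restrict (Icc a t)).support ⊆ Iic t :=
  support_subset_Iic_of_measure_Ioi_eq_zero <| by
    rw [restrict_apply measurableSet_Ioi]
    exact measure_mono_null (fun r ⟨hr, _, hrt⟩ => (not_le.2 hr hrt).elim) measure_empty

section RestrictIcc

variable {ρ : Measure ℝ} {t : ℝ}

theorem zero_mem_support_restrict_Icc (h0 : ρ {0} ≠ 0) (ht : 0 ≤ t) :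
    (0 : ℝ) ∈ (ρ.restrict (Icc 0 t)).support :=
  mem_support_of_measure_singleton_ne_zero <| by
    rwa [restrict_apply (measurableSet_singleton 0),
      inter_eq_left.2 (singleton_subset_iff.2 (left_mem_Icc.2 ht))]

theorem sSup_support_restrict_Icc_mem_Icc (h0 : ρ {0} ≠ 0) (ht : 0 ≤ t) :
    sSup (ρ.restrict (Icc 0 t)).support ∈ Icc 0 t :=
  ⟨le_csSup ⟨t, support_restrict_Icc_subset_Iic ρ 0 t⟩ (zero_mem_support_restrict_Icc h0 ht),
    csSup_le ⟨0, zero_mem_support_restrict_Icc h0 ht⟩ (support_restrict_Icc_subset_Iic ρ 0 t)⟩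

theorem Icc_sSup_support_restrict_Icc_ae_eq (h0 : ρ {0} ≠ 0) (ht : 0 ≤ t) :
    Icc 0 (sSup (ρ.restrict (Icc 0 t)).support) =ᵐ[ρ] Icc 0 t := by
  set e := sSup (ρ.restrict (Icc 0 t)).support
  obtain ⟨he0, het⟩ := sSup_support_restrict_Icc_mem_Icc h0 ht
  have hnull : ρ (Ioc e t) = 0 := by
    refine measure_mono_null (t := Ioi e ∩ Icc 0 t)
      (fun r hr => ⟨mem_Ioi.2 hr.1, he0.trans hr.1.le, hr.2⟩) ?_
    rw [← restrict_apply measurableSet_Ioi]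
    exact measure_Ioi_sSup_support ⟨t, support_restrict_Icc_subset_Iic ρ 0 t⟩
  rw [← Icc_union_Ioc_eq_Icc he0 het]
  exact (union_ae_eq_left_of_ae_eq_empty (ae_eq_empty.2 hnull)).symm

end RestrictIcc

end MeasureTheory.Measure

theorem timeEnd_eq_sSup_support {m : ℕ} (μ : Measure (E m × ℝ)) :
    timeEnd μ = sSup (timeMarg μ).support := by
  rw [timeEnd, Measure.support_eq_setOf_measure_Ioo_ne_zero]

theorem maskedM_eq_smul_restrict {m : ℕ} (μ : Measure (E m × ℝ)) (t : ℝ) :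
    maskedM μ t = (timeMarg μ (Icc 0 t))⁻¹ • μ.restrict (Prod.snd ⁻¹' Icc 0 t) := by
  rw [maskedM, univ_prod, timeMarg, Measure.map_apply measurable_snd measurableSet_Icc]

theorem timeMarg_maskedM {m : ℕ} (μ : Measure (E m × ℝ)) (t : ℝ) :
    timeMarg (maskedM μ t) = (timeMarg μ (Icc 0 t))⁻¹ • (timeMarg μ).restrict (Icc 0 t) := by
  rw [maskedM_eq_smul_restrict, timeMarg, Measure.map_smul, timeMarg,
    Measure.restrict_map measurable_snd measurableSet_Icc]

theorem timeEnd_maskedM {m : ℕ} (μ : Measure (E m × ℝ)) [IsFiniteMeasure μ] (t : ℝ) :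
    timeEnd (maskedM μ t) = sSup ((timeMarg μ).restrict (Icc 0 t)).support := by
  have hfin : timeMarg μ (Icc 0 t) ≠ ∞ := measure_ne_top (μ.map Prod.snd) _
  rw [timeEnd_eq_sSup_support, timeMarg_maskedM,
    Measure.support_smul _ (ENNReal.inv_ne_zero.2 hfin)]

theorem maskedM_congr {m : ℕ} {μ : Measure (E m × ℝ)} {s t : ℝ}
    (h : Icc 0 s =ᵐ[timeMarg μ] Icc 0 t) : maskedM μ s = maskedM μ t := by
  have h' : Prod.snd ⁻¹' Icc 0 s =ᵐ[μ] Prod.snd ⁻¹' Icc 0 t :=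
    (measurable_snd.quasiMeasurePreserving μ).preimage_ae_eq h
  rw [maskedM_eq_smul_restrict, maskedM_eq_smul_restrict, measure_congr h,
    Measure.restrict_congr_set h']

theorem reduced_representation_general {d d' : ℕ} (Ω : Set (E d))
    {C σ : ℝ} (hσ : σ ∈ Ioo (0:ℝ) 1)
    (Λ : STMap d d') (hcausal : IsCausalM Ω C σ Λ) (hident : IsIdentifiableM Ω C σ Λ) :
    ∀ μ : Measure (E d × ℝ), IsLipCtx Ω C σ μ → ∀ x ∈ Ω, ∀ t ∈ Icc (0:ℝ) 1,
      Λ μ (x, t) = Λ (maskedM μ t) (x, timeEnd (maskedM μ t)) := by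
  intro μ hμ x hx t ht
  have : IsProbabilityMeasure μ := hμ.1
  have h0 : timeMarg μ {0} ≠ 0 :=
    ((ENNReal.ofReal_pos.2 hσ.1).trans_le hμ.2.2.1).ne'
  rw [timeEnd_maskedM]
  set e := sSup ((timeMarg μ).restrict (Icc 0 t)).support
  have he : e ∈ Icc 0 t := Measure.sSup_support_restrict_Icc_mem_Icc h0 ht.1
  have hmask : maskedM μ e = maskedM μ t :=
    maskedM_congr (Measure.Icc_sSup_support_restrict_Icc_ae_eq h0 ht.1)
  calc Λ μ (x, t) = Λ (maskedM μ t) (x, t) := hcausal μ hμ x hx t ht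
    _ = Λ (maskedM μ e) (x, e) := (hident μ hμ e ⟨he.1, he.2.trans ht.2⟩ t ht hmask x hx).symm
    _ = Λ (maskedM μ t) (x, e) := by rw [hmask]

/-- **Reduced-map representation of causal identifiable maps (Lemma 6 (i)).** For a
causal identifiable space-time in-context map `Λ`, one has `Λ(μ, x, t) = Λ̄(μ_t, x)` for
all `(μ, x, t) ∈ Lip_C^σ(Ω̃) × Ω̃`, where `Λ̄(ν, x) = Λ(ν, x, e(ν̄))` is the reduced map
and `e(ν̄) = max supp(ν̄)`. -/
theorem reduced_representation {d d' : ℕ} (Ω : Set (E d)) (hΩ : IsCompact Ω)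
    {C σ : ℝ} (hC : 0 < C) (hσ : σ ∈ Ioo (0:ℝ) 1)
    (Λ : STMap d d') (hcausal : IsCausalM Ω C σ Λ) (hident : IsIdentifiableM Ω C σ Λ) :
    ∀ μ : Measure (E d × ℝ), IsLipCtx Ω C σ μ → ∀ x ∈ Ω, ∀ t ∈ Icc (0:ℝ) 1,
      Λ μ (x, t) = Λ (maskedM μ t) (x, timeEnd (maskedM μ t)) :=
  reduced_representation_general Ω hσ Λ hcausal hident
end
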